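/- arXiv:2110.05088 — 4 statements merged into one kernel-verified Lean document; each statement's English description precedes it below -/
import Mathlib

section
/- In the CWC elimination loop, a feature F_{π(i)} is retained (not removed at step i) if and only if there exists a positive-negative pair (p,q) such that B_{π(i)} distinguishes (p,q) but no feature that has not yet been processed and no feature already retained distinguishes (p,q). Formally, with S_i the set of retained features among {F_{π(1)},…,F_{π(i−1)}} and T_i = {F_{π(i+1)},…,F_{π(k)}}, F_{π(i)} is retained iff S_i ∪ T_i is inconsistent. -/
noncomputable section
open Classical

def Consistent {α ι : Type*} (D : Finset α) (feat : α → ι → Bool) (cls : α → Bool)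
    (F' : Finset ι) : Prop :=
  ∀ x ∈ D, ∀ y ∈ D, (∀ i ∈ F', feat x i = feat y i) → cls x = cls y

def cwcStep {α ι : Type*} [DecidableEq ι] (D : Finset α) (feat : α → ι → Bool)
    (cls : α → Bool) (S : Finset ι) (f : ι) : Finset ι :=
  if Consistent D feat cls (S.erase f) then S.erase f else S

def cwc {α ι : Type*} [DecidableEq ι] (D : Finset α) (feat : α → ι → Bool)
    (cls : α → Bool) (F : Finset ι) {k : ℕ} (π : Fin k → ι) : Finset ι :=
  (List.ofFn π).foldl (cwcStep D feat cls) F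

end

/-! Features processed after `f` never touch `f`, so `f` is retained iff it survives its own
step. Nothing is removed before it is processed, so at that step `f` and all unprocessed
features are still present, and the set tested there, the current set minus `f`, is exactly
the retained processed features together with the unprocessed ones. -/

theorem Finset.erase_eq_sdiff_insert_union {ι : Type*} [DecidableEq ι] {s t : Finset ι} {a : ι}
    (hts : t ⊆ s) (ha : a ∉ t) : s.erase a = (s \ insert a t) ∪ t := by
  ext x
  by_cases hx : x ∈ t
  · simp [hx, hts hx, ne_of_mem_of_not_mem hx ha]
  · simp [hx, and_comm]

section CWC

variable {α ι : Type*} [DecidableEq ι] (D : Finset α) (feat : α → ι → Bool) (cls : α → Bool)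

theorem mem_cwcStep_of_ne {S : Finset ι} {f x : ι} (hx : x ≠ f) :
    x ∈ cwcStep D feat cls S f ↔ x ∈ S := by
  unfold cwcStep
  split_ifs <;> simp [hx]

theorem mem_cwcStep_self_iff {S : Finset ι} {f : ι} :
    f ∈ cwcStep D feat cls S f ↔ f ∈ S ∧ ¬ Consistent D feat cls (S.erase f) := by
  unfold cwcStep
  split_ifs with h <;> simp [h]

theorem mem_foldl_cwcStep_of_notMem {l : List ι} {x : ι} (hx : x ∉ l) (S : Finset ι) :
    x ∈ l.foldl (cwcStep D feat cls) S ↔ x ∈ S := by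
  induction l generalizing S with
  | nil => rfl
  | cons f l ih =>
    rw [List.mem_cons, not_or] at hx
    rw [List.foldl_cons, ih hx.2, mem_cwcStep_of_ne D feat cls hx.1]

theorem mem_foldl_cwcStep_append_cons_iff {F : Finset ι} {pre post : List ι} {f : ι}
    (hnodup : (pre ++ f :: post).Nodup) (hF : ∀ x ∈ pre ++ f :: post, x ∈ F) :
    f ∈ (pre ++ f :: post).foldl (cwcStep D feat cls) F ↔
      ¬ Consistent D feat cls
        ((pre.foldl (cwcStep D feat cls) F \ (f :: post).toFinset) ∪ post.toFinset) := by
  obtain ⟨-, hfpost, hdisj⟩ := List.nodup_append.mp hnodup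
  have hf_post : f ∉ post := (List.nodup_cons.mp hfpost).1
  set G := pre.foldl (cwcStep D feat cls) F
  have hG : ∀ x ∈ f :: post, x ∈ G := fun x hx =>
    (mem_foldl_cwcStep_of_notMem D feat cls (fun hxpre => hdisj x hxpre x hx rfl) F).mpr
      (hF x (List.mem_append_right _ hx))
  have herase : G.erase f = (G \ (f :: post).toFinset) ∪ post.toFinset := by
    rw [List.toFinset_cons]
    exact Finset.erase_eq_sdiff_insert_union
      (fun x hx => hG x (List.mem_cons_of_mem _ (List.mem_toFinset.mp hx)))
      (by simpa using hf_post)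
  rw [List.foldl_append, List.foldl_cons, mem_foldl_cwcStep_of_notMem D feat cls hf_post,
    mem_cwcStep_self_iff, ← herase]
  exact and_iff_right (hG f List.mem_cons_self)

end CWC

theorem stmt_6_general {α ι : Type*} [DecidableEq ι] (D : Finset α)
    (feat : α → ι → Bool) (cls : α → Bool)
    {k : ℕ} (F : Finset ι) (π : Fin k → ι)
    (hπinj : Function.Injective π) (hπF : ∀ i, π i ∈ F)
    (i : Fin k) :
    π i ∈ cwc D feat cls F π ↔
      ¬ Consistent D feat cls
        ((((List.ofFn π).take (i : ℕ)).foldl (cwcStep D feat cls) F \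
            ((List.ofFn π).drop (i : ℕ)).toFinset) ∪
          ((List.ofFn π).drop ((i : ℕ) + 1)).toFinset) := by
  have hdrop : (List.ofFn π).drop i = π i :: (List.ofFn π).drop (i + 1) := by
    rw [List.drop_eq_getElem_cons (by simp), List.getElem_ofFn]
  have hsplit : List.ofFn π = (List.ofFn π).take i ++ π i :: (List.ofFn π).drop (i + 1) := by
    rw [← hdrop, List.take_append_drop]
  have hnodup : (List.ofFn π).Nodup := List.nodup_ofFn.mpr hπinj
  have hF : ∀ x ∈ List.ofFn π, x ∈ F := by simpa [List.mem_ofFn] using hπF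
  rw [hsplit] at hnodup hF
  rw [hdrop]
  conv_lhs => rw [cwc, hsplit]
  exact mem_foldl_cwcStep_append_cons_iff D feat cls hnodup hF

/-- `F_{π i}` is retained by CWC (i.e. belongs to the final output) iff the
union of the features retained among the first `i` processed ones (`Sᵢ`) and
the not-yet-processed features (`Tᵢ`) is inconsistent.  Here `Sᵢ` is the
partial fold after `i` steps minus the unprocessed features, and
`Tᵢ = {π j : j > i}` (zero-based indexing). -/
theorem stmt_6 {α ι : Type*} [DecidableEq ι] (D : Finset α)
    (feat : α → ι → Bool) (cls : α → Bool)
    {k : ℕ} (F : Finset ι) (π : Fin k → ι)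
    (hπinj : Function.Injective π) (hπF : ∀ i, π i ∈ F) (hπsurj : ∀ f ∈ F, ∃ i, π i = f)
    (hF : Consistent D feat cls F) (i : Fin k) :
    π i ∈ cwc D feat cls F π ↔
      ¬ Consistent D feat cls
        ((((List.ofFn π).take (i : ℕ)).foldl (cwcStep D feat cls) F \
            ((List.ofFn π).drop (i : ℕ)).toFinset) ∪
          ((List.ofFn π).drop ((i : ℕ) + 1)).toFinset) :=
  stmt_6_general D feat cls F π hπinj hπF i
end

section
/- The correctness of the cumulative-OR implementation: define Z_i[h] = OR over j ≥ i of B_{π(j)}[h], and run the loop maintaining R and S with R[i] = ¬ ⋀_{h=1}^{mn} (Z_{i+1}[h] ∨ S[h]) and update S[h] ← S[h] ∨ (R[i] ∧ B_{π(i)}[h]). Then after all k iterations, {F_{π(i)} : R[i] = 1} equals exactly the feature set output by the CWC elimination procedure, and this set is minimal and consistent. -/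
noncomputable section
open Classical

/-- Consistency of a set of features in terms of their bit strings:
the OR of the `B j` for `j ∈ T` is all-ones. -/
def ConsB {k N : ℕ} (B : Fin k → Fin N → Bool) (T : Finset (Fin k)) : Prop :=
  ∀ h : Fin N, ∃ j ∈ T, B j h = true

def cwcStepB {k N : ℕ} (B : Fin k → Fin N → Bool) (S : Finset (Fin k))
    (f : Fin k) : Finset (Fin k) :=
  if ConsB B (S.erase f) then S.erase f else S

/-- The CWC elimination procedure on bit strings, processing features in the
order `π 0, π 1, …`. -/
def cwcB {k N : ℕ} (B : Fin k → Fin N → Bool) (π : Equiv.Perm (Fin k)) :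
    Finset (Fin k) :=
  (List.ofFn fun i : Fin k => π i).foldl (cwcStepB B) Finset.univ

/-- `Z i h` = OR over `j ≥ i` of `B (π j) h` (zero-based). -/
def Zor {k N : ℕ} (B : Fin k → Fin N → Bool) (π : Equiv.Perm (Fin k))
    (i : ℕ) (h : Fin N) : Bool :=
  decide (∃ j : Fin k, i ≤ (j : ℕ) ∧ B (π j) h = true)

/-- `R[i] = ¬ ⋀ₕ (Z (i+1) h ∨ S h)`, computed from the current string `S`. -/
def Rbit {k N : ℕ} (B : Fin k → Fin N → Bool) (π : Equiv.Perm (Fin k))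
    (S : Fin N → Bool) (i : ℕ) : Bool :=
  ! decide (∀ h : Fin N, Zor B π (i + 1) h = true ∨ S h = true)

/-- The maintained string `S` after `i` iterations: initialized to all-zeros,
updated by `S[h] ← S[h] ∨ (R[i] ∧ B (π i) h)`. -/
def Sseq {k N : ℕ} (B : Fin k → Fin N → Bool) (π : Equiv.Perm (Fin k)) :
    ℕ → Fin N → Bool
  | 0 => fun _ => false
  | i + 1 => fun h =>
      if hi : i < k then
        Sseq B π i h || (Rbit B π (Sseq B π i) i && B (π ⟨i, hi⟩) h)
      else Sseq B π i h

end

noncomputable section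
open Classical

namespace CWCaux

variable {k N : ℕ} (B : Fin k → Fin N → Bool) (π : Equiv.Perm (Fin k))

def Afold (i : ℕ) : Finset (Fin k) :=
  ((List.ofFn fun j : Fin k => π j).take i).foldl (cwcStepB B) Finset.univ

lemma Afold_succ {i : ℕ} (hi : i < k) :
    Afold B π (i + 1) = cwcStepB B (Afold B π i) (π ⟨i, hi⟩) := by
  unfold Afold
  rw [List.take_succ]
  have hlen : i < (List.ofFn fun j : Fin k => π j).length := by simpa using hi
  rw [List.getElem?_eq_getElem hlen]
  simp [List.foldl_append]

lemma Afold_succ_stall {i : ℕ} (hi : ¬ i < k) :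
    Afold B π (i + 1) = Afold B π i := by
  unfold Afold
  rw [List.take_of_length_le, List.take_of_length_le] <;> simp <;> omega

lemma Afold_anti {i i' : ℕ} (h : i ≤ i') : Afold B π i' ⊆ Afold B π i := by
  induction i' with
  | zero => simpa [Nat.le_zero.mp h]
  | succ n ih =>
    rcases Nat.lt_or_ge i (n+1) with h' | h'
    · refine subset_trans ?_ (ih (by omega))
      by_cases hn : n < k
      · rw [Afold_succ B π hn]
        unfold cwcStepB
        split
        · exact Finset.erase_subset _ _
        · exact subset_rfl
      · rw [Afold_succ_stall B π hn]
    · have : i = n + 1 := by omega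
      subst this; exact subset_rfl

lemma Sseq_true (i : ℕ) (h : Fin N) :
    Sseq B π i h = true ↔
      ∃ j : Fin k, (j : ℕ) < i ∧ Rbit B π (Sseq B π (j : ℕ)) (j : ℕ) = true ∧
        B (π j) h = true := by
  induction i with
  | zero => simp [Sseq]
  | succ n ih =>
    by_cases hn : n < k
    · rw [show Sseq B π (n+1) h =
        (Sseq B π n h || (Rbit B π (Sseq B π n) n && B (π ⟨n, hn⟩) h)) by simp [Sseq, hn]]
      simp only [Bool.or_eq_true, Bool.and_eq_true, ih]
      constructor
      · rintro (⟨j, hj, hR, hB⟩ | ⟨hR, hB⟩)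
        · exact ⟨j, by omega, hR, hB⟩
        · exact ⟨⟨n, hn⟩, by simp, hR, hB⟩
      · rintro ⟨j, hj, hR, hB⟩
        rcases Nat.lt_or_ge (j : ℕ) n with h' | h'
        · exact Or.inl ⟨j, h', hR, hB⟩
        · have hje : j = ⟨n, hn⟩ := by
            apply Fin.ext; simp; omega
          subst hje
          exact Or.inr ⟨hR, hB⟩
    · rw [show Sseq B π (n+1) h = Sseq B π n h by simp [Sseq, hn]]
      rw [ih]
      constructor
      · rintro ⟨j, hj, hR, hB⟩; exact ⟨j, by omega, hR, hB⟩
      · rintro ⟨j, hj, hR, hB⟩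
        exact ⟨j, by have := j.isLt; omega, hR, hB⟩

lemma mem_Afold : ∀ i, ∀ j : Fin k,
    (π j ∈ Afold B π i ↔
      ((j : ℕ) < i ∧ Rbit B π (Sseq B π (j : ℕ)) (j : ℕ) = true) ∨ i ≤ (j : ℕ)) := by
  intro i
  induction i with
  | zero => simp [Afold]
  | succ n ih =>
    by_cases hn : n < k
    · -- first: ConsB of erase ↔ ∀ h, Zor(n+1) ∨ Sseq n
      have hcons : ConsB B ((Afold B π n).erase (π ⟨n, hn⟩)) ↔
          (∀ h : Fin N, Zor B π (n + 1) h = true ∨ Sseq B π n h = true) := by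
        constructor
        · intro hc h
          obtain ⟨f, hf, hB⟩ := hc h
          obtain ⟨j, rfl⟩ := π.surjective f
          rw [Finset.mem_erase] at hf
          obtain ⟨hne, hmem⟩ := hf
          rw [ih j] at hmem
          have hne' : j ≠ ⟨n, hn⟩ := fun e => hne (by rw [e])
          rcases hmem with ⟨hj, hR⟩ | hj
          · exact Or.inr ((Sseq_true B π n h).mpr ⟨j, hj, hR, hB⟩)
          · have : n + 1 ≤ (j : ℕ) := by
              rcases Nat.lt_or_ge n (j : ℕ) with h' | h'
              · omega
              · exfalso
                exact hne' (by apply Fin.ext; simp only [Fin.val_mk]; omega)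
            exact Or.inl (by unfold Zor; exact decide_eq_true ⟨j, this, hB⟩)
        · intro hc h
          rcases hc h with hz | hs
          · unfold Zor at hz
            obtain ⟨j, hj, hB⟩ := of_decide_eq_true hz
            refine ⟨π j, ?_, hB⟩
            rw [Finset.mem_erase]
            refine ⟨?_, (ih j).mpr (Or.inr (by omega))⟩
            intro e
            have := π.injective e
            have : (j : ℕ) = n := by rw [this]
            omega
          · obtain ⟨j, hj, hR, hB⟩ := (Sseq_true B π n h).mp hs
            refine ⟨π j, ?_, hB⟩
            rw [Finset.mem_erase]
            refine ⟨?_, (ih j).mpr (Or.inl ⟨hj, hR⟩)⟩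
            intro e
            have := π.injective e
            have : (j : ℕ) = n := by rw [this]
            omega
      have hRiff : Rbit B π (Sseq B π n) n = true ↔
          ¬ ConsB B ((Afold B π n).erase (π ⟨n, hn⟩)) := by
        rw [hcons]
        unfold Rbit
        simp
      intro j
      rw [Afold_succ B π hn]
      unfold cwcStepB
      by_cases hR : Rbit B π (Sseq B π n) n = true
      · rw [if_neg (hRiff.mp hR), ih j]
        constructor
        · rintro (⟨hj, hRj⟩ | hj)
          · exact Or.inl ⟨by omega, hRj⟩
          · rcases Nat.lt_or_ge n (j : ℕ) with h' | h'
            · exact Or.inr (by omega)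
            · have hje : (j : ℕ) = n := by omega
              exact Or.inl ⟨by omega, by rw [hje]; exact hR⟩
        · rintro (⟨hj, hRj⟩ | hj)
          · rcases Nat.lt_or_ge (j : ℕ) n with h' | h'
            · exact Or.inl ⟨h', hRj⟩
            · exact Or.inr (by omega)
          · exact Or.inr (by omega)
      · have hc : ConsB B ((Afold B π n).erase (π ⟨n, hn⟩)) := by
          by_contra hnc; exact hR (hRiff.mpr hnc)
        rw [if_pos hc, Finset.mem_erase, ih j]
        constructor
        · rintro ⟨hne, ⟨hj, hRj⟩ | hj⟩
          · exact Or.inl ⟨by omega, hRj⟩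
          · have : (j : ℕ) ≠ n := fun e => hne (by congr 1; exact Fin.ext e)
            exact Or.inr (by omega)
        · rintro (⟨hj, hRj⟩ | hj)
          · have hjn : (j : ℕ) ≠ n := by
              intro e
              exact hR (by rw [← e]; exact hRj)
            refine ⟨fun e => hjn (by rw [π.injective e]), Or.inl ⟨by omega, hRj⟩⟩
          · refine ⟨?_, Or.inr (by omega)⟩
            intro e
            have : (j : ℕ) = n := by rw [π.injective e]
            omega
    · intro j
      rw [Afold_succ_stall B π hn, ih j]
      have := j.isLt
      constructor
      · rintro (⟨hj, hRj⟩ | hj) 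
        · exact Or.inl ⟨by omega, hRj⟩
        · omega
      · rintro (⟨hj, hRj⟩ | hj)
        · exact Or.inl ⟨by omega, hRj⟩
        · omega

lemma cons_Afold (hfull : ∀ h : Fin N, ∃ j : Fin k, B j h = true) (i : ℕ) :
    ConsB B (Afold B π i) := by
  induction i with
  | zero =>
    intro h
    obtain ⟨j, hj⟩ := hfull h
    exact ⟨j, by simp [Afold], hj⟩
  | succ n ih =>
    by_cases hn : n < k
    · rw [Afold_succ B π hn]
      unfold cwcStepB
      split
      · assumption
      · exact ih
    · rw [Afold_succ_stall B π hn]; exact ih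

lemma cwcB_eq : cwcB B π = Afold B π k := by
  unfold cwcB Afold
  rw [List.take_of_length_le (by simp)]

lemma consB_mono {T T' : Finset (Fin k)} (h : T ⊆ T') (hc : ConsB B T) :
    ConsB B T' := fun x => by
  obtain ⟨j, hj, hB⟩ := hc x
  exact ⟨j, h hj, hB⟩

lemma Rbit_iff (n : ℕ) (hn : n < k) :
    Rbit B π (Sseq B π n) n = true ↔
      ¬ ConsB B ((Afold B π n).erase (π ⟨n, hn⟩)) := by
  have hcons : ConsB B ((Afold B π n).erase (π ⟨n, hn⟩)) ↔
      (∀ h : Fin N, Zor B π (n + 1) h = true ∨ Sseq B π n h = true) := by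
    constructor
    · intro hc h
      obtain ⟨f, hf, hB⟩ := hc h
      obtain ⟨j, rfl⟩ := π.surjective f
      rw [Finset.mem_erase] at hf
      obtain ⟨hne, hmem⟩ := hf
      rw [mem_Afold B π n j] at hmem
      have hne' : j ≠ ⟨n, hn⟩ := fun e => hne (by rw [e])
      rcases hmem with ⟨hj, hR⟩ | hj
      · exact Or.inr ((Sseq_true B π n h).mpr ⟨j, hj, hR, hB⟩)
      · have : n + 1 ≤ (j : ℕ) := by
          rcases Nat.lt_or_ge n (j : ℕ) with h' | h'
          · omega
          · exfalso
            exact hne' (by apply Fin.ext; simp only [Fin.val_mk]; omega)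
        exact Or.inl (by unfold Zor; exact decide_eq_true ⟨j, this, hB⟩)
    · intro hc h
      rcases hc h with hz | hs
      · unfold Zor at hz
        obtain ⟨j, hj, hB⟩ := of_decide_eq_true hz
        refine ⟨π j, ?_, hB⟩
        rw [Finset.mem_erase]
        refine ⟨?_, (mem_Afold B π n j).mpr (Or.inr (by omega))⟩
        intro e
        have := π.injective e
        have : (j : ℕ) = n := by rw [this]
        omega
      · obtain ⟨j, hj, hR, hB⟩ := (Sseq_true B π n h).mp hs
        refine ⟨π j, ?_, hB⟩
        rw [Finset.mem_erase]
        refine ⟨?_, (mem_Afold B π n j).mpr (Or.inl ⟨hj, hR⟩)⟩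
        intro e
        have := π.injective e
        have : (j : ℕ) = n := by rw [this]
        omega
  rw [hcons]
  unfold Rbit
  simp

end CWCaux


/-- Correctness of the cumulative-OR implementation: the features `π i` with
`R[i] = 1` are exactly the output of the CWC elimination procedure, and this
set is consistent and minimal. -/
theorem stmt_7 {k N : ℕ} (B : Fin k → Fin N → Bool) (π : Equiv.Perm (Fin k))
    (hfull : ∀ h : Fin N, ∃ j : Fin k, B j h = true) :
    (Finset.univ.filter fun i : Fin k =>
        Rbit B π (Sseq B π (i : ℕ)) (i : ℕ) = true).image π = cwcB B π ∧
    ConsB B (cwcB B π) ∧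
    ∀ T ⊂ cwcB B π, ¬ ConsB B T := by
  have hcwc := CWCaux.cwcB_eq B π
  have hmem := CWCaux.mem_Afold B π k
  refine ⟨?_, ?_, ?_⟩
  · ext f
    simp only [Finset.mem_image, Finset.mem_filter, Finset.mem_univ, true_and]
    constructor
    · rintro ⟨j, hR, rfl⟩
      rw [hcwc]
      exact (hmem j).mpr (Or.inl ⟨j.isLt, hR⟩)
    · intro hf
      obtain ⟨j, rfl⟩ := π.surjective f
      rw [hcwc, hmem j] at hf
      rcases hf with ⟨_, hR⟩ | hj
      · exact ⟨j, hR, rfl⟩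
      · exact absurd hj (by have := j.isLt; omega)
  · rw [hcwc]
    exact CWCaux.cons_Afold B π hfull k
  · intro T hT hcT
    obtain ⟨f, hfA, hfT⟩ := Finset.exists_of_ssubset hT
    obtain ⟨j, rfl⟩ := π.surjective f
    rw [hcwc] at hT hfA
    have hR : Rbit B π (Sseq B π (j : ℕ)) (j : ℕ) = true := by
      rcases (hmem j).mp hfA with ⟨_, h⟩ | h
      · exact h
      · exact absurd h (by have := j.isLt; omega)
    have hnot := (CWCaux.Rbit_iff B π (j : ℕ) j.isLt).mp hR
    apply hnot
    refine CWCaux.consB_mono B ?_ hcT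
    intro x hx
    rw [Finset.mem_erase]
    constructor
    · rintro rfl
      rw [show (⟨(j : ℕ), j.isLt⟩ : Fin k) = j from rfl] at hx
      exact hfT hx
    · exact CWCaux.Afold_anti B π (by have := j.isLt; omega) (hT.subset hx)
end
end

section
/- Finding a minimum-cardinality consistent feature subset is at least as hard as minimum set cover: given any set cover instance (universe U, family of subsets 𝒮), one can construct a dataset D with features indexed by 𝒮 such that a feature subset F' is consistent iff the corresponding subfamily of 𝒮 covers U; hence minimum consistent feature subsets correspond exactly to minimum set covers. -/
/-- Reduction from set cover: the dataset has one negative point `none` (all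
feature values 0) and one positive point `some u` per element `u` of the
universe, with `feat (some u) S = 1` iff `u ∈ S`.  Then `F' ⊆ 𝒮` is consistent
iff `F'` covers `U`, and hence minimum consistent feature subsets are exactly
minimum set covers. -/
theorem stmt_8 {α : Type*} [DecidableEq α] [DecidableEq (Finset α)]
    (U : Finset α) (𝒮 : Finset (Finset α))
    (hcover : ∀ u ∈ U, ∃ S ∈ 𝒮, u ∈ S)
    (D : Finset (Option α)) (hD : D = insert none (U.image some))
    (feat : Option α → Finset α → Bool)
    (hfeat : (∀ S, feat none S = false) ∧ ∀ u S, feat (some u) S = decide (u ∈ S))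
    (cls : Option α → Bool) (hcls : ∀ x, cls x = x.isSome) :
    (∀ F' ⊆ 𝒮, (Consistent D feat cls F' ↔ ∀ u ∈ U, ∃ S ∈ F', u ∈ S)) ∧
    (∀ F' ⊆ 𝒮,
      ((Consistent D feat cls F' ∧
          ∀ F'' ⊆ 𝒮, Consistent D feat cls F'' → F'.card ≤ F''.card) ↔
        ((∀ u ∈ U, ∃ S ∈ F', u ∈ S) ∧
          ∀ F'' ⊆ 𝒮, (∀ u ∈ U, ∃ S ∈ F'', u ∈ S) → F'.card ≤ F''.card))) := by
  obtain ⟨hnone, hsome⟩ := hfeat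
  have key : ∀ F' : Finset (Finset α),
      (Consistent D feat cls F' ↔ ∀ u ∈ U, ∃ S ∈ F', u ∈ S) := by
    intro F'
    constructor
    · intro hc u hu
      have hx : (some u : Option α) ∈ D := by
        rw [hD]; exact Finset.mem_insert_of_mem (Finset.mem_image_of_mem _ hu)
      have hy : (none : Option α) ∈ D := by rw [hD]; exact Finset.mem_insert_self _ _
      by_contra h
      push_neg at h
      have := hc (some u) hx none hy (by
        intro S hS
        rw [hsome, hnone, decide_eq_false (h S hS)])
      simp [hcls] at this
    · intro hcov x hx y hy hfeq
      rw [hD] at hx hy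
      rcases Finset.mem_insert.mp hx with hx | hx <;>
        rcases Finset.mem_insert.mp hy with hy | hy
      · rw [hx, hy]
      · obtain ⟨v, hv, rfl⟩ := Finset.mem_image.mp hy
        obtain ⟨S, hS, hvS⟩ := hcov v hv
        have := hfeq S hS
        rw [hx, hnone, hsome, decide_eq_true hvS] at this
        exact absurd this (by simp)
      · obtain ⟨v, hv, rfl⟩ := Finset.mem_image.mp hx
        obtain ⟨S, hS, hvS⟩ := hcov v hv
        have := hfeq S hS
        rw [hy, hnone, hsome, decide_eq_true hvS] at this
        exact absurd this (by simp)
      · obtain ⟨v, hv, rfl⟩ := Finset.mem_image.mp hx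
        obtain ⟨w, hw, rfl⟩ := Finset.mem_image.mp hy
        simp [hcls]
  refine ⟨fun F' _ => key F', fun F' _ => ?_⟩
  constructor
  · rintro ⟨hc, hmin⟩
    exact ⟨(key F').mp hc, fun F'' hF'' hcov => hmin F'' hF'' ((key F'').mpr hcov)⟩
  · rintro ⟨hcov, hmin⟩
    exact ⟨(key F').mpr hcov, fun F'' hF'' hc => hmin F'' hF'' ((key F'').mp hc)⟩
end

section
/- Monotonicity of the coverage invariant in CWC's loop: throughout the loop, the maintained string S (OR of B-strings of retained features among the first i processed) together with Z_{i+1} (OR of B-strings of unprocessed features) is always all-ones, i.e., S[h] ∨ Z_{i+1}[h] = 1 for all h and all iterations i; this invariant implies the output set is consistent. -/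
lemma Sseq_mem {k N : ℕ} (B : Fin k → Fin N → Bool) (π : Equiv.Perm (Fin k))
    (i : ℕ) (h : Fin N) (hS : Sseq B π i h = true) :
    ∃ j : Fin k, (j : ℕ) < i ∧ Rbit B π (Sseq B π (j : ℕ)) (j : ℕ) = true ∧
      B (π j) h = true := by
  induction i with
  | zero => simp [Sseq] at hS
  | succ i ih =>
    by_cases hi : i < k
    · simp only [Sseq, dif_pos hi, Bool.or_eq_true, Bool.and_eq_true] at hS
      rcases hS with hS | ⟨hR, hB⟩
      · obtain ⟨j, hj, hRj, hBj⟩ := ih hS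
        exact ⟨j, Nat.lt_succ_of_lt hj, hRj, hBj⟩
      · exact ⟨⟨i, hi⟩, Nat.lt_succ_self i, hR, hB⟩
    · simp only [Sseq, dif_neg hi] at hS
      obtain ⟨j, hj, hRj, hBj⟩ := ih hS
      exact ⟨j, Nat.lt_succ_of_lt hj, hRj, hBj⟩

lemma inv_lemma {k N : ℕ} (B : Fin k → Fin N → Bool) (π : Equiv.Perm (Fin k))
    (hfull : ∀ h : Fin N, ∃ j : Fin k, B j h = true) :
    ∀ i ≤ k, ∀ h : Fin N, (Sseq B π i h || Zor B π i h) = true := by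
  intro i
  induction i with
  | zero =>
    intro _ h
    obtain ⟨j, hj⟩ := hfull h
    have : Zor B π 0 h = true := by
      simp only [Zor, decide_eq_true_eq]
      exact ⟨π.symm j, Nat.zero_le _, by simpa using hj⟩
    simp [this]
  | succ i ih =>
    intro hik h
    have hi : i < k := hik
    have ihh := ih (Nat.le_of_lt hi)
    by_cases hZ : Zor B π (i + 1) h = true
    · simp [hZ]
    · -- need Sseq (i+1) h = true
      have hSnew : Sseq B π (i + 1) h = true := by
        simp only [Sseq, dif_pos hi, Bool.or_eq_true, Bool.and_eq_true]
        by_cases hR : Rbit B π (Sseq B π i) i = true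
        · -- from invariant at i
          rcases Bool.or_eq_true _ _ |>.mp (ihh h) with hS | hZi
          · exact Or.inl hS
          · right
            refine ⟨hR, ?_⟩
            simp only [Zor, decide_eq_true_eq] at hZi
            obtain ⟨j, hji, hBj⟩ := hZi
            rcases Nat.eq_or_lt_of_le hji with heq | hlt
            · have : j = ⟨i, hi⟩ := Fin.ext heq.symm
              rwa [← this]
            · exfalso
              apply hZ
              simp only [Zor, decide_eq_true_eq]
              exact ⟨j, hlt, hBj⟩
        · -- R = false: ∀ h', Z_{i+1} ∨ S, at h Z false so S true
          left
          simp only [Rbit, Bool.not_eq_true', Bool.not_eq_false,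
            decide_eq_true_eq] at hR
          rcases hR h with h1 | h2
          · exact absurd h1 hZ
          · exact h2
      simp [hSnew]

/-- Monotonicity of the coverage invariant: after `i` iterations the string
`S` (OR of retained features among the first `i` processed) together with the
OR of the unprocessed features is all-ones; this invariant implies the output
set (features with `R[i] = 1`) is consistent. -/
theorem stmt_19 {k N : ℕ} (B : Fin k → Fin N → Bool) (π : Equiv.Perm (Fin k))
    (hfull : ∀ h : Fin N, ∃ j : Fin k, B j h = true) :
    (∀ i ≤ k, ∀ h : Fin N, (Sseq B π i h || Zor B π i h) = true) ∧
    ConsB B ((Finset.univ.filter fun i : Fin k =>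
      Rbit B π (Sseq B π (i : ℕ)) (i : ℕ) = true).image π) := by
  refine ⟨inv_lemma B π hfull, ?_⟩
  intro h
  have hZk : Zor B π k h = false := by
    simp only [Zor, decide_eq_false_iff_not]
    rintro ⟨j, hjk, -⟩
    exact absurd j.2 (Nat.not_lt.mpr hjk)
  have hSk : Sseq B π k h = true := by
    have := inv_lemma B π hfull k le_rfl h
    simpa [hZk] using this
  obtain ⟨j, _, hRj, hBj⟩ := Sseq_mem B π k h hSk
  refine ⟨π j, ?_, hBj⟩
  simp only [Finset.mem_image, Finset.mem_filter, Finset.mem_univ, true_and]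
  exact ⟨j, hRj, rfl⟩
end
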